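/- The graph H contains no induced path on 9 vertices, and every induced path in H having an endpoint in the clique K = {v_1,...,v_5} has at most 5 vertices (in particular, no induced path on 8 vertices has an endpoint in K). -/
import Mathlib


open SimpleGraph

/-- The vertices of the gadget `H`: a clique `K = {v 0, …, v 4}` (the paper's
`v_1, …, v_5`), vertices `x i`, `y i` for `i : Fin 5` (the paper's `x_{i+1}, y_{i+1}`),
and for every `i : Fin 5` a clique `K^i` on the four vertices `K i j`, `j : Fin 4`. -/
inductive HVert where
  | v : Fin 5 → HVert
  | x : Fin 5 → HVert
  | y : Fin 5 → HVert
  | K : Fin 5 → Fin 4 → HVert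
deriving DecidableEq

deriving instance Fintype for HVert

/-- The gadget `H`: `{v 0, …, v 4}` is a clique; `x 0 ∼ v 3, v 4`; `y 0 ∼ v 1, v 2`;
`x 1 ∼ v 0, v 4`; `y 1 ∼ v 2, v 3`; `x 2 ∼ v 0, v 1`; `y 2 ∼ v 3, v 4`;
`x 3 ∼ v 1, v 2`; `y 3 ∼ v 0, v 4`; `x 4 ∼ v 2, v 3`; `y 4 ∼ v 0, v 1`
(with the indices shifted down by one from the paper's `1, …, 5` to `0, …, 4`);
and for each `i`, the set `K^i` is a clique and both `x i` and `y i` are complete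
to `K^i`. -/
def HGraph : SimpleGraph HVert :=
  SimpleGraph.fromRel (fun a b =>
    (∃ i j, a = HVert.v i ∧ b = HVert.v j) ∨
    (∃ i j, a = HVert.x i ∧ b = HVert.K i j) ∨
    (∃ i j, a = HVert.y i ∧ b = HVert.K i j) ∨
    (∃ i j j', a = HVert.K i j ∧ b = HVert.K i j') ∨
    (a = HVert.x 0 ∧ (b = HVert.v 3 ∨ b = HVert.v 4)) ∨
    (a = HVert.y 0 ∧ (b = HVert.v 1 ∨ b = HVert.v 2)) ∨
    (a = HVert.x 1 ∧ (b = HVert.v 0 ∨ b = HVert.v 4)) ∨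
    (a = HVert.y 1 ∧ (b = HVert.v 2 ∨ b = HVert.v 3)) ∨
    (a = HVert.x 2 ∧ (b = HVert.v 0 ∨ b = HVert.v 1)) ∨
    (a = HVert.y 2 ∧ (b = HVert.v 3 ∨ b = HVert.v 4)) ∨
    (a = HVert.x 3 ∧ (b = HVert.v 1 ∨ b = HVert.v 2)) ∨
    (a = HVert.y 3 ∧ (b = HVert.v 0 ∨ b = HVert.v 4)) ∨
    (a = HVert.x 4 ∧ (b = HVert.v 2 ∨ b = HVert.v 3)) ∨
    (a = HVert.y 4 ∧ (b = HVert.v 0 ∨ b = HVert.v 1)))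

/-! ### A computable description of the adjacency relation of `HGraph` -/

set_option synthInstance.maxHeartbeats 2000000 in
set_option synthInstance.maxSize 2048 in
instance : DecidableRel HGraph.Adj := fun a b =>
  decidable_of_iff _ (SimpleGraph.fromRel_adj _ a b).symm

def xPairs : List (ℕ × ℕ) := [(0,3),(0,4),(1,0),(1,4),(2,0),(2,1),(3,1),(3,2),(4,2),(4,3)]
def yPairs : List (ℕ × ℕ) := [(0,1),(0,2),(1,2),(1,3),(2,3),(2,4),(3,0),(3,4),(4,0),(4,1)]

def adjB : HVert → HVert → Bool
  | .v i, .v j => decide (i ≠ j)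
  | .v j, .x i | .x i, .v j => decide ((i.val, j.val) ∈ xPairs)
  | .v j, .y i | .y i, .v j => decide ((i.val, j.val) ∈ yPairs)
  | .x i, .K i' _ | .K i' _, .x i => decide (i = i')
  | .y i, .K i' _ | .K i' _, .y i => decide (i = i')
  | .K i j, .K i' j' => decide (i = i' ∧ j ≠ j')
  | _, _ => false

theorem adjB_iff (a b : HVert) : HGraph.Adj a b ↔ adjB a b = true := by
  cases a <;> cases b <;>
    simp [HGraph, SimpleGraph.fromRel_adj, adjB, xPairs, yPairs] <;>
    first
      | exact eq_comm
      | exact ⟨fun ⟨h1, h2⟩ => h2.elim (fun h => ⟨h.symm, fun hq => h1 h.symm hq⟩)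
                 (fun h => ⟨h, fun hq => h1 h hq⟩),
               fun ⟨h1, h2⟩ => ⟨fun _ => h2, Or.inr h1⟩⟩
      | (rename_i p q; fin_cases p <;> fin_cases q <;> decide)

/-! ### A fast `ℕ`-encoded version of the adjacency relation -/

def e : HVert → ℕ
  | .v i => i.val
  | .x i => 5 + i.val
  | .y i => 10 + i.val
  | .K i j => 15 + 4 * i.val + j.val

def adjMask : ℕ → ℕ
  | 0 => 24798
  | 1 => 17821
  | 2 => 3867
  | 3 => 6711
  | 4 => 12399
  | 5 => 491544
  | 6 => 7864337
  | 7 => 125829123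
  | 8 => 2013265926
  | 9 => 32212254732
  | 10 => 491526
  | 11 => 7864332
  | 12 => 125829144
  | 13 => 2013265937
  | 14 => 32212254723
  | 15 => 459808
  | 16 => 427040
  | 17 => 361504
  | 18 => 230432
  | 19 => 7342144
  | 20 => 6817856
  | 21 => 5769280
  | 22 => 3672128
  | 23 => 117444736
  | 24 => 109056128
  | 25 => 92278912
  | 26 => 58724480
  | 27 => 1879056640
  | 28 => 1744838912
  | 29 => 1476403456
  | 30 => 939532544
  | 31 => 30064787968
  | 32 => 27917304320
  | 33 => 23622337024
  | 34 => 15032402432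
  | _ => 0

def adjN (a b : ℕ) : Bool := (adjMask a).testBit b

theorem hAdjN : ∀ a b : HVert, adjB a b = adjN (e a) (e b) := by decide

theorem adjN_iff (a b : HVert) : HGraph.Adj a b ↔ adjN (e a) (e b) = true :=
  (adjB_iff a b).trans (by rw [hAdjN a b])

theorem e_inj : ∀ a b : HVert, e a = e b → a = b := by decide

theorem e_lt : ∀ a : HVert, e a < 35 := by decide

/-! ### Induced paths as lists of `ℕ`-codes, and a DFS search -/

/-- `extN c l = true` iff `c` can extend the induced path `l` (listed from the
far end towards the fixed endpoint): `c` is adjacent to the head of `l` and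
non-adjacent (and distinct) from everything else in `l`. -/
def extN (c : ℕ) : List ℕ → Bool
  | [] => true
  | b :: t => adjN c b && t.all fun d => !(adjN c d) && !(c == d)

/-- `ipathN l = true` iff `l` is (the code list of) an induced path. -/
def ipathN : List ℕ → Bool
  | [] => true
  | c :: t => extN c t && ipathN t

/-- `reachN n l = true` iff the induced path `l` can be extended (at its head)
by `n` further vertices with codes `< 35`. -/
def reachN : ℕ → List ℕ → Bool
  | 0, _ => true
  | n+1, l => (List.range 35).any fun c => extN c l && reachN n (c :: l)

theorem ipathN_suffix : ∀ a b : List ℕ, ipathN (a ++ b) = true → ipathN b = true := by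
  intro a
  induction a with
  | nil => exact fun b h => h
  | cons c t ih =>
      intro b h
      simp only [List.cons_append, ipathN, Bool.and_eq_true] at h
      exact ih b h.2

theorem reachN_of : ∀ l m : List ℕ, (∀ c ∈ l, c < 35) →
    ipathN (l ++ m) = true → reachN l.length m = true := by
  intro l
  induction l using List.reverseRecOn with
  | nil => intro m _ _; rfl
  | append_singleton l c ih =>
      intro m hlt h
      rw [List.append_assoc] at h
      have h' : ipathN (l ++ (c :: m)) = true := h
      have h1 : reachN l.length (c :: m) = true :=
        ih (c :: m) (fun d hd => hlt d (List.mem_append_left _ hd)) h'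
      have h2 : ipathN (c :: m) = true := ipathN_suffix l _ h'
      have h3 : extN c m = true := by
        simp only [ipathN, Bool.and_eq_true] at h2; exact h2.1
      have hlen : (l ++ [c]).length = l.length + 1 := by simp
      rw [hlen]
      show ((List.range 35).any fun d => extN d m && reachN l.length (d :: m)) = true
      rw [List.any_eq_true]
      refine ⟨c, List.mem_range.2 (hlt c (by simp)), ?_⟩
      rw [h3, h1]; rfl

/-! ### Symmetry: rotating the indices by one is an automorphism -/

def sigN : ℕ → ℕ
  | 0 => 1 | 1 => 2 | 2 => 3 | 3 => 4 | 4 => 0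
  | 5 => 6 | 6 => 7 | 7 => 8 | 8 => 9 | 9 => 5
  | 10 => 11 | 11 => 12 | 12 => 13 | 13 => 14 | 14 => 10
  | 15 => 19 | 16 => 20 | 17 => 21 | 18 => 22
  | 19 => 23 | 20 => 24 | 21 => 25 | 22 => 26
  | 23 => 27 | 24 => 28 | 25 => 29 | 26 => 30
  | 27 => 31 | 28 => 32 | 29 => 33 | 30 => 34
  | 31 => 15 | 32 => 16 | 33 => 17 | 34 => 18
  | n => n

theorem sigN_lt : ∀ c < 35, sigN c < 35 := by decide

theorem sigN_adj : ∀ a < 35, ∀ b < 35, adjN (sigN a) (sigN b) = adjN a b := by decide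

theorem sigN_inj : ∀ a < 35, ∀ b < 35, sigN a = sigN b → a = b := by decide

theorem reachN_sig : ∀ (n : ℕ) (l : List ℕ), (∀ c ∈ l, c < 35) →
    reachN n l = true → reachN n (l.map sigN) = true := by
  intro n
  induction n with
  | zero => intro l _ _; rfl
  | succ n ih =>
      intro l hlt h
      show ((List.range 35).any fun c => extN c (l.map sigN) && reachN n (c :: l.map sigN)) = true
      have h' : ((List.range 35).any fun c => extN c l && reachN n (c :: l)) = true := h
      rw [List.any_eq_true] at h' ⊢
      obtain ⟨c, hc, hcl⟩ := h'
      rw [Bool.and_eq_true] at hcl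
      have hc35 : c < 35 := List.mem_range.1 hc
      refine ⟨sigN c, List.mem_range.2 (sigN_lt c hc35), ?_⟩
      rw [Bool.and_eq_true]
      constructor
      · -- extN (sigN c) (l.map sigN)
        cases l with
        | nil => rfl
        | cons b t =>
            have hb : b < 35 := hlt b (by simp)
            have hext := hcl.1
            simp only [extN, Bool.and_eq_true, List.all_eq_true] at hext
            obtain ⟨hadjcb, hall⟩ := hext
            rw [List.map_cons]
            show (adjN (sigN c) (sigN b) &&
              (t.map sigN).all fun d => !(adjN (sigN c) d) && !(sigN c == d)) = true
            rw [Bool.and_eq_true]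
            refine ⟨by rw [sigN_adj c hc35 b hb]; exact hadjcb, ?_⟩
            rw [List.all_eq_true]
            intro d hd
            rw [List.mem_map] at hd
            obtain ⟨d0, hd0, rfl⟩ := hd
            have hd35 : d0 < 35 := hlt d0 (by simp [hd0])
            have hthis := hall d0 hd0
            simp only [Bool.and_eq_true, Bool.not_eq_true', beq_eq_false_iff_ne, ne_eq]
              at hthis ⊢
            exact ⟨by rw [sigN_adj c hc35 d0 hd35]; exact hthis.1,
              fun hcon => hthis.2 (sigN_inj c hc35 d0 hd35 hcon)⟩
      · have : (sigN c :: l.map sigN) = (c :: l).map sigN := rfl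
        rw [this]
        exact ih (c :: l) (fun d hd => by
          rcases List.mem_cons.1 hd with rfl | hd
          · exact hc35
          · exact hlt d hd) hcl.2

def sigIter : ℕ → ℕ → ℕ
  | 0, c => c
  | j+1, c => sigN (sigIter j c)

theorem sigIter_lt : ∀ j c, c < 35 → sigIter j c < 35 := by
  intro j
  induction j with
  | zero => exact fun c h => h
  | succ j ih => exact fun c h => sigN_lt _ (ih c h)

theorem reachN_iter (n : ℕ) : ∀ j c, c < 35 →
    reachN n [c] = true → reachN n [sigIter j c] = true := by
  intro j
  induction j with
  | zero => exact fun c _ h => h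
  | succ j ih =>
      intro c hc h
      have h1 := ih c hc h
      have h2 := reachN_sig n [sigIter j c]
        (fun d hd => by rw [List.mem_singleton] at hd; subst hd; exact sigIter_lt j c hc) h1
      exact h2

theorem cover : ∀ c < 35, ∃ j < 6, sigIter j c ∈ ([0, 5, 10, 15, 16, 17, 18] : List ℕ) := by
  decide

set_option maxHeartbeats 40000000 in
theorem no9reps : ∀ r ∈ ([0, 5, 10, 15, 16, 17, 18] : List ℕ), reachN 8 [r] = false := by
  decide

theorem no9N : ∀ c < 35, reachN 8 [c] = false := by
  intro c hc
  by_contra h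
  have htrue : reachN 8 [c] = true := by
    cases hb : reachN 8 [c] with
    | false => exact absurd hb h
    | true => rfl
  obtain ⟨j, _, hrep⟩ := cover c hc
  have := reachN_iter 8 j c hc htrue
  rw [no9reps _ hrep] at this
  exact Bool.false_ne_true this

set_option maxHeartbeats 4000000 in
theorem noK6N : ∀ c < 5, reachN 5 [c] = false := by decide

/-! ### From graph embeddings of path graphs to `ipathN` lists -/

theorem ipath_emb {m : ℕ} (f : SimpleGraph.pathGraph m ↪g HGraph) (p : ℕ → Fin m)
    (k : ℕ)
    (hinj : ∀ i j, i < k → j < k → p i = p j → i = j)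
    (hadj : ∀ i j, i < k → j < k →
      (((p i).val + 1 = (p j).val ∨ (p j).val + 1 = (p i).val) ↔ (j = i + 1 ∨ i = j + 1))) :
    ipathN (((List.range k).reverse).map (fun i => e (f (p i)))) = true := by
  induction k with
  | zero => rfl
  | succ k ih =>
      have hrec : ∀ n : ℕ, (List.range (n+1)).reverse = n :: (List.range n).reverse := by
        intro n; rw [List.range_succ, List.reverse_append]; rfl
      rw [hrec k, List.map_cons]
      show (extN (e (f (p k))) _ && ipathN _) = true
      rw [Bool.and_eq_true]
      constructor
      · -- extension check
        cases k with
        | zero => rfl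
        | succ j =>
            rw [hrec j, List.map_cons]
            show (adjN (e (f (p (j+1)))) (e (f (p j))) &&
              ((List.range j).reverse.map (fun i => e (f (p i)))).all
                (fun d => !(adjN (e (f (p (j+1)))) d) && !(e (f (p (j+1))) == d))) = true
            rw [Bool.and_eq_true]
            constructor
            · rw [← adjN_iff]
              rw [SimpleGraph.Embedding.map_adj_iff, SimpleGraph.pathGraph_adj]
              exact (hadj (j+1) j (by omega) (by omega)).2 (Or.inr rfl)
            · rw [List.all_eq_true]
              intro d hd
              rw [List.mem_map] at hd
              obtain ⟨i, hi, rfl⟩ := hd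
              rw [List.mem_reverse, List.mem_range] at hi
              have hne : ¬ HGraph.Adj (f (p (j+1))) (f (p i)) := by
                rw [SimpleGraph.Embedding.map_adj_iff, SimpleGraph.pathGraph_adj]
                intro hcon
                have := (hadj (j+1) i (by omega) (by omega)).1 hcon
                omega
              have hadjF : adjN (e (f (p (j+1)))) (e (f (p i))) = false := by
                cases hb : adjN (e (f (p (j+1)))) (e (f (p i))) with
                | false => rfl
                | true => exact absurd ((adjN_iff _ _).2 hb) hne
              have hneq : ¬ (e (f (p (j+1))) = e (f (p i))) := by
                intro hcon
                have := hinj (j+1) i (by omega) (by omega)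
                  (f.injective (e_inj _ _ hcon))
                omega
              rw [hadjF]
              simp [hneq]
      · exact ih (fun i j hi hj => hinj i j (by omega) (by omega))
          (fun i j hi hj => hadj i j (by omega) (by omega))

theorem endpoint_reach (k : ℕ) (g : ℕ → ℕ) (hg : ∀ i, g i < 35)
    (h : ipathN (((List.range (k+1)).reverse).map g) = true) :
    reachN k [g 0] = true := by
  have h1 : ((List.range (k+1)).reverse).map g
      = ((List.range k).reverse.map (fun i => g (i+1))) ++ [g 0] := by
    rw [List.range_succ_eq_map]
    simp [List.map_reverse, List.map_map, Function.comp, Nat.succ_eq_add_one]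
  rw [h1] at h
  have h2 := reachN_of ((List.range k).reverse.map (fun i => g (i+1))) [g 0]
    (fun c hc => by
      rw [List.mem_map] at hc
      obtain ⟨i, _, rfl⟩ := hc
      exact hg _) h
  simpa using h2

theorem statement15 :
    IsEmpty (SimpleGraph.pathGraph 9 ↪g HGraph) ∧
    ∀ (m : ℕ) (hm : 6 ≤ m) (f : SimpleGraph.pathGraph m ↪g HGraph),
      (∀ i : Fin 5, f ⟨0, by omega⟩ ≠ HVert.v i) ∧
      (∀ i : Fin 5, f ⟨m - 1, by omega⟩ ≠ HVert.v i) := by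
  constructor
  · refine ⟨fun f => ?_⟩
    set p : ℕ → Fin 9 := fun i => ⟨min i 8, by omega⟩ with hp
    have hip := ipath_emb f p 9
      (fun i j hi hj hij => by
        have := Fin.mk.inj_iff.1 hij
        omega)
      (fun i j hi hj => by
        show (min i 8 + 1 = min j 8 ∨ min j 8 + 1 = min i 8) ↔ _
        omega)
    have hr : reachN 8 [e (f (p 0))] = true :=
      endpoint_reach 8 (fun i => e (f (p i))) (fun i => e_lt _) hip
    have := no9N (e (f (p 0))) (e_lt _)
    rw [this] at hr
    exact Bool.false_ne_true hr
  · intro m hm f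
    constructor
    · intro i hv
      set p : ℕ → Fin m := fun i => ⟨min i (m-1), by omega⟩ with hp
      have hip := ipath_emb f p 6
        (fun a b ha hb hab => by
          have := Fin.mk.inj_iff.1 hab
          omega)
        (fun a b ha hb => by
          show (min a (m-1) + 1 = min b (m-1) ∨ min b (m-1) + 1 = min a (m-1)) ↔ _
          omega)
      have hr : reachN 5 [e (f (p 0))] = true :=
        endpoint_reach 5 (fun i => e (f (p i))) (fun i => e_lt _) hip
      have hp0 : p 0 = ⟨0, by omega⟩ := by
        apply Fin.ext
        show min 0 (m-1) = 0
        omega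
      rw [hp0, hv] at hr
      have hlt : (i.val : ℕ) < 5 := i.isLt
      have := noK6N (e (HVert.v i)) (by exact hlt)
      rw [this] at hr
      exact Bool.false_ne_true hr
    · intro i hv
      set p : ℕ → Fin m := fun i => ⟨m - 1 - min i (m-1), by omega⟩ with hp
      have hip := ipath_emb f p 6
        (fun a b ha hb hab => by
          have := Fin.mk.inj_iff.1 hab
          omega)
        (fun a b ha hb => by
          show (m - 1 - min a (m-1) + 1 = m - 1 - min b (m-1) ∨
            m - 1 - min b (m-1) + 1 = m - 1 - min a (m-1)) ↔ _
          omega)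
      have hr : reachN 5 [e (f (p 0))] = true :=
        endpoint_reach 5 (fun i => e (f (p i))) (fun i => e_lt _) hip
      have hp0 : p 0 = ⟨m - 1, by omega⟩ := by
        apply Fin.ext
        show m - 1 - min 0 (m-1) = m - 1
        omega
      rw [hp0, hv] at hr
      have hlt : (i.val : ℕ) < 5 := i.isLt
      have := noK6N (e (HVert.v i)) (by exact hlt)
      rw [this] at hr
      exact Bool.false_ne_true hr
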